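/- For every integer k ≥ 3, letting p = 1/(1 + √(k(k−1)/2)), the inequality k²·p²·(1−p)^{k−2}·(1 + (k−2)p) > 1 holds; equivalently, at this p one has U_{k,1,p}(3) < U_{k,1,p}(2). -/

import Mathlib

open Finset

/-- `U_{k,ℓ,p}(T) = T − (k/ℓ)·∑_{t=0}^{T} (T−t)·C(k,t)·p^{ℓ+t}·(1−p)^{k−t}`. -/
noncomputable def Ufun (k ℓ : ℕ) (p : ℝ) (T : ℕ) : ℝ :=
  (T : ℝ) - ((k : ℝ) / (ℓ : ℝ)) * ∑ t ∈ Finset.range (T + 1),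
    ((T : ℝ) - (t : ℝ)) * (Nat.choose k t : ℝ) * p ^ (ℓ + t) * (1 - p) ^ (k - t)

/-!
At the critical point `k(k-1)p² = 2(1-p)²`, and both claims reduce to
`1 < kp(2 + (k-2)p)(1-p)^(k-1)`. By the Bonferroni inequalities, the binomial expansion of
`(1-p)^(k-1)` truncated after its degree-5 term is a lower bound. In `v = (k-1)p` this truncation is
a polynomial in `v` and `p`, and modulo `v(v+p) = 2(1-p)²` the inequality becomes linear in `v`.
Replacing `v` by the lower bound `(2√2(1-p) - p)/2` leaves a univariate polynomial in `p`, which is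
positive on the range `0 < p ≤ 0.37` forced by `k ≥ 3`. Degree 5 is needed: as `k → ∞` the
product tends to `√2(2 + √2)e^(-√2) ≈ 1.17`, whereas the degree-3 truncation only gives about `0.55`.
-/

open Nat

noncomputable def altBinomPartialSum (n m : ℕ) (p : ℝ) : ℝ :=
  ∑ j ∈ range (m + 1), (-1) ^ j * (n.choose j : ℝ) * p ^ j

theorem altBinomPartialSum_zero_left (m : ℕ) (p : ℝ) : altBinomPartialSum 0 m p = 1 := by
  simp [altBinomPartialSum, sum_range_succ']

theorem altBinomPartialSum_zero_right (n : ℕ) (p : ℝ) : altBinomPartialSum n 0 p = 1 := by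
  simp [altBinomPartialSum]

theorem altBinomPartialSum_succ_succ (n m : ℕ) (p : ℝ) :
    altBinomPartialSum (n + 1) (m + 1) p =
      altBinomPartialSum n (m + 1) p - p * altBinomPartialSum n m p := by
  unfold altBinomPartialSum
  rw [sum_range_succ', sum_range_succ' _ (m + 1), mul_sum, add_sub_right_comm, ← sum_sub_distrib]
  congr 1
  · refine sum_congr rfl fun j _ => ?_
    rw [Nat.choose_succ_succ']
    push_cast
    ring
  · simp

theorem sign_mul_altBinomPartialSum_sub_nonneg {p : ℝ} (hp0 : 0 ≤ p) (hp1 : p ≤ 1) :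
    ∀ n m : ℕ, 0 ≤ (-1) ^ m * (altBinomPartialSum n m p - (1 - p) ^ n)
  | 0, m => by simp [altBinomPartialSum_zero_left]
  | n + 1, 0 => by
      simpa [altBinomPartialSum_zero_right] using pow_le_one₀ (sub_nonneg.2 hp1) (by linarith)
  | n + 1, m + 1 => by
      have step : (-1) ^ (m + 1) * (altBinomPartialSum (n + 1) (m + 1) p - (1 - p) ^ (n + 1)) =
          (-1) ^ (m + 1) * (altBinomPartialSum n (m + 1) p - (1 - p) ^ n) +
            p * ((-1) ^ m * (altBinomPartialSum n m p - (1 - p) ^ n)) := by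
        rw [altBinomPartialSum_succ_succ]
        ring
      rw [step]
      exact add_nonneg (sign_mul_altBinomPartialSum_sub_nonneg hp0 hp1 n (m + 1))
        (mul_nonneg hp0 (sign_mul_altBinomPartialSum_sub_nonneg hp0 hp1 n m))

theorem altBinomPartialSum_le_one_sub_pow {p : ℝ} (hp0 : 0 ≤ p) (hp1 : p ≤ 1) (n : ℕ) {m : ℕ}
    (hm : Odd m) : altBinomPartialSum n m p ≤ (1 - p) ^ n := by
  have h := sign_mul_altBinomPartialSum_sub_nonneg hp0 hp1 n m
  rw [hm.neg_one_pow] at h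
  linarith

theorem altBinomPartialSum_eq_sum_prod (n m : ℕ) (p : ℝ) :
    altBinomPartialSum n m p =
      ∑ j ∈ range (m + 1), (-1) ^ j / j ! * ∏ i ∈ range j, ((n : ℝ) * p - i * p) := by
  refine sum_congr rfl fun j _ => ?_
  simp_rw [← sub_mul, prod_mul_distrib, prod_const, card_range]
  rw [Nat.cast_choose_eq_descPochhammer_div, descPochhammer_eval_eq_prod_range]
  ring

theorem one_lt_mul_quintic_truncation {v p : ℝ} (hp0 : 0 ≤ p) (hp : p ≤ 37 / 100) (hv : 0 ≤ v)
    (hrel : v * (v + p) = 2 * (1 - p) ^ 2) :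
    1 < (v + p) * (2 + v - p) *
      ∑ j ∈ range 6, (-1) ^ j / j ! * ∏ i ∈ range j, (v - i * p) := by
  -- `A + B v` on the right is the remainder on division by `v² + vp - 2(1-p)²` in `ℝ[p][v]`.
  have hrem : (v + p) * (2 + v - p) *
      ∑ j ∈ range 6, (-1) ^ j / j ! * ∏ i ∈ range j, (v - i * p) - 1
      = (-32/15 + 4*p - 133/30*p^2 + 13*p^3 - 899/30*p^4 + 562/15*p^5 - 359/15*p^6 + 6*p^7)
        + (8/5 - 3/10*p - 11/5*p^2 + 47/6*p^3 - 238/15*p^4 + 239/15*p^5 - 6*p^6) * v := by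
    simp only [sum_range_succ, prod_range_succ, sum_range_zero, prod_range_zero, factorial]
    push_cast
    grind
  -- `(2v + p)² = p² + 8(1-p)²`, and `181/64` is a rational lower bound for `2√2`.
  have hv_ge : 181 / 64 * (1 - p) ≤ 2 * v + p := by
    nlinarith [sq_nonneg (1 - p), sq_nonneg (2 * v + p - 181 / 64 * (1 - p))]
  have hB : 0 ≤ 8/5 - 3/10*p - 11/5*p^2 + 47/6*p^3 - 238/15*p^4 + 239/15*p^5 - 6*p^6 := by
    nlinarith [pow_le_pow_left₀ hp0 hp 2, pow_le_pow_left₀ hp0 hp 4, pow_le_pow_left₀ hp0 hp 6,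
      pow_nonneg hp0 3, pow_nonneg hp0 5]
  -- This is `2A + B(181/64(1-p) - p)`.
  have hF : 0 < 31/120 + 657/640*p - 5353/384*p^2 + 21725/384*p^3 - 258803/1920*p^4
      + 11567/64*p^5 - 120797/960*p^6 + 1119/32*p^7 := by
    nlinarith [pow_le_pow_left₀ hp0 hp 2, pow_le_pow_left₀ hp0 hp 4,
      pow_le_pow_left₀ hp0 hp 6, pow_nonneg hp0 3, pow_nonneg hp0 5,
      pow_nonneg hp0 7, sq_nonneg (p - 1/5), sq_nonneg (p - 3/10), mul_nonneg hp0 hp0]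
  nlinarith [mul_nonneg hB (sub_nonneg.2 hv_ge)]

theorem Ufun_succ (k ℓ : ℕ) (p : ℝ) (T : ℕ) :
    Ufun k ℓ p (T + 1) = Ufun k ℓ p T + 1 -
      (k / ℓ : ℝ) * ∑ t ∈ range (T + 1), (k.choose t : ℝ) * p ^ (ℓ + t) * (1 - p) ^ (k - t) := by
  have hsum : ∑ t ∈ range (T + 1 + 1),
        ((T + 1 : ℕ) - (t : ℝ)) * (k.choose t : ℝ) * p ^ (ℓ + t) * (1 - p) ^ (k - t) =
      ∑ t ∈ range (T + 1), ((T : ℝ) - t) * (k.choose t : ℝ) * p ^ (ℓ + t) * (1 - p) ^ (k - t) +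
        ∑ t ∈ range (T + 1), (k.choose t : ℝ) * p ^ (ℓ + t) * (1 - p) ^ (k - t) := by
    rw [sum_range_succ, ← sum_add_distrib]
    simp only [Nat.cast_succ, sub_self, zero_mul, add_zero]
    exact sum_congr rfl fun t _ => by ring
  rw [Ufun, Ufun, hsum]
  push_cast
  ring

theorem critical_point_pos_and_eq {x p : ℝ} (hx : 1 ≤ x) (hp : p = 1 / (1 + √(x * (x - 1) / 2))) :
    0 < p ∧ x * (x - 1) * p ^ 2 = 2 * (1 - p) ^ 2 := by
  have hs2 := Real.sq_sqrt (show 0 ≤ x * (x - 1) / 2 by nlinarith)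
  have hsp : √(x * (x - 1) / 2) * p = 1 - p := by
    rw [hp]; field_simp; ring
  refine ⟨by rw [hp]; positivity, ?_⟩
  linear_combination (-2 * p ^ 2) * hs2 + 2 * (√(x * (x - 1) / 2) * p + 1 - p) * hsp

theorem one_lt_mul_one_sub_pow {k : ℕ} (hk : 3 ≤ k) {p : ℝ} (hp0 : 0 < p)
    (hrel : k * (k - 1) * p ^ 2 = 2 * (1 - p) ^ 2) :
    1 < k * p * (2 + (k - 2) * p) * (1 - p) ^ (k - 1) := by
  have hk' : (3 : ℝ) ≤ k := by exact_mod_cast hk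
  have hp1 : p ≤ 37 / 100 := by
    have : 6 * p ^ 2 ≤ 2 * (1 - p) ^ 2 := by rw [← hrel]; gcongr; nlinarith
    nlinarith
  have htrunc := altBinomPartialSum_le_one_sub_pow hp0.le (by linarith) (k - 1) (by decide : Odd 5)
  rw [altBinomPartialSum_eq_sum_prod, Nat.cast_sub (by omega), Nat.cast_one] at htrunc
  have hquintic := one_lt_mul_quintic_truncation hp0.le hp1 (v := (k - 1) * p) (by nlinarith)
    (by linear_combination hrel)
  have hfactor : 0 ≤ (k : ℝ) * p * (2 + (k - 2) * p) := by
    have : (0 : ℝ) ≤ k - 2 := by linarith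
    positivity
  calc 1 < k * p * (2 + (k - 2) * p) *
        ∑ j ∈ range 6, (-1) ^ j / j ! * ∏ i ∈ range j, ((k - 1) * p - i * p) := by
        convert hquintic using 2; ring
    _ ≤ _ := by gcongr

theorem sq_mul_sq_mul_pow_eq {k : ℕ} (hk : 2 ≤ k) {p : ℝ}
    (hrel : k * (k - 1) * p ^ 2 = 2 * (1 - p) ^ 2) :
    (k : ℝ) ^ 2 * p ^ 2 * (1 - p) ^ (k - 2) * (1 + (k - 2) * p) =
      k * p * (2 + (k - 2) * p) * (1 - p) ^ (k - 1) := by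
  obtain ⟨n, rfl⟩ := Nat.exists_eq_add_of_le' hk
  rw [show n + 2 - 2 = n by omega, show n + 2 - 1 = n + 1 by omega]
  linear_combination ((n + 2 : ℕ) * p * (1 - p) ^ n) * hrel

theorem mul_sum_range_three_eq {k : ℕ} (hk : 2 ≤ k) {p : ℝ}
    (hrel : k * (k - 1) * p ^ 2 = 2 * (1 - p) ^ 2) :
    (k : ℝ) * ∑ t ∈ range 3, (k.choose t : ℝ) * p ^ (1 + t) * (1 - p) ^ (k - t) =
      k * p * (2 + (k - 2) * p) * (1 - p) ^ (k - 1) := by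
  obtain ⟨n, rfl⟩ := Nat.exists_eq_add_of_le' hk
  simp only [sum_range_succ, sum_range_zero, Nat.choose_zero_right, Nat.choose_one_right,
    Nat.cast_choose_two]
  rw [show n + 2 - 0 = n + 2 by omega, show n + 2 - 2 = n by omega, show n + 2 - 1 = n + 1 by omega]
  linear_combination ((n + 2 : ℕ) * p * (1 - p) ^ n / 2) * hrel

theorem U3_lt_U2_at_critical_point (k : ℕ) (hk : 3 ≤ k) (p : ℝ)
    (hp : p = 1 / (1 + Real.sqrt ((k:ℝ) * ((k:ℝ) - 1) / 2))) :
    1 < (k:ℝ) ^ 2 * p ^ 2 * (1 - p) ^ (k - 2) * (1 + ((k:ℝ) - 2) * p) ∧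
    Ufun k 1 p 3 < Ufun k 1 p 2 := by
  obtain ⟨hp0, hrel⟩ := critical_point_pos_and_eq (by exact_mod_cast (by omega : 1 ≤ k)) hp
  have hmain := one_lt_mul_one_sub_pow hk hp0 hrel
  refine ⟨by rwa [sq_mul_sq_mul_pow_eq (by omega) hrel], ?_⟩
  have hstep := Ufun_succ k 1 p 2
  rw [Nat.cast_one, div_one, mul_sum_range_three_eq (by omega) hrel] at hstep
  rw [hstep]
  linarith
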